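/- Let (A, R, N) be a strongly consistent AFN and ADF^FN its corresponding ADF, and let X ⊆ A be strongly coherent in (A, R, N) (and thus pd-acyclic conflict-free in ADF^FN). Then X defends an argument a ∈ A in (A, R, N) if and only if a is decisively in w.r.t. the acyclic range v_X^a of X in ADF^FN. -/

import Mathlib

open Classical

universe u

namespace Dialectical

variable {α : Type u}

/-! ### Two-valued (partial) interpretations -/

/-- A partial two-valued interpretation: `some true` = t, `some false` = f, `none` = undefined. -/
abbrev Interp (α : Type u) := α → Option Bool

/-- The domain of an interpretation. -/
def idom (v : Interp α) : Set α := {a | v a ≠ none}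

/-- The set of arguments mapped to t. -/
def tset (v : Interp α) : Set α := {a | v a = some true}

/-- The set of arguments mapped to f. -/
def fset (v : Interp α) : Set α := {a | v a = some false}

/-- `w` is a completion of `v` to the set `Z`. -/
def Completion (v w : Interp α) (Z : Set α) : Prop :=
  idom w = Z ∧ ∀ a ∈ idom v, w a = v a

/-- The interpretation assigning t on `T` and f on `F' \ T`. -/
noncomputable def mkInterp (T F' : Set α) : Interp α :=
  fun a => if a ∈ T then some true else if a ∈ F' then some false else none

/-! ### Abstract dialectical frameworks -/

/-- An abstract dialectical framework: links and acceptance conditions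
(`true` = in, `false` = out). -/
structure ADF (α : Type u) where
  L : α → α → Prop
  C : α → Set α → Bool

namespace ADF

variable (D : ADF α)

/-- The parents of an argument. -/
def par (a : α) : Set α := {p | D.L p a}

/-- Evaluating the acceptance condition of `s` under an interpretation. -/
def evalCond (s : α) (w : Interp α) : Bool := D.C s (tset w ∩ D.par s)

/-- `s` is decisively in w.r.t. `v`. -/
def DecisivelyIn (v : Interp α) (s : α) : Prop :=
  ∀ w : Interp α, Completion v w (idom v ∪ D.par s) → D.evalCond s w = true

/-- `s` is decisively out w.r.t. `v`. -/
def DecisivelyOut (v : Interp α) (s : α) : Prop :=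
  ∀ w : Interp α, Completion v w (idom v ∪ D.par s) → D.evalCond s w = false

/-- `v` is a minimal decisively in interpretation for `s` (`v ∈ min_dec(in,s)`). -/
def MinDecIn (v : Interp α) (s : α) : Prop :=
  D.DecisivelyIn v s ∧
  ∀ w : Interp α, D.DecisivelyIn w s → tset w ⊆ tset v → fset w ⊆ fset v →
    tset w = tset v ∧ fset w = fset v

/-- `pd` is a positive dependency function on `X`. -/
def PDFun (X : Set α) (pd : α → Option (Interp α)) : Prop :=
  ∀ a ∈ X,
    (∀ v, pd a = some v → D.MinDecIn v a ∧ tset v ⊆ X) ∧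
    (pd a = none → ¬ ∃ v, D.MinDecIn v a ∧ tset v ⊆ X)

end ADF

/-- The subset of `X` on which `pd` is non-null. -/
def soundDom (X : Set α) (pd : α → Option (Interp α)) : Set α :=
  {a ∈ X | pd a ≠ none}

namespace ADF
variable (D : ADF α)

/-- `pd` is a maximally sound pd-function of `X`. -/
def MaxSound (X : Set α) (pd : α → Option (Interp α)) : Prop :=
  D.PDFun X pd ∧
  ¬ ∃ (X'' : Set α) (pd' : α → Option (Interp α)),
      D.PDFun X'' pd' ∧ (∀ a ∈ X'', pd' a ≠ none) ∧
      soundDom X pd ⊂ X'' ∧ X'' ⊆ X ∧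
      ∀ a ∈ soundDom X pd, pd' a = pd a

end ADF

/-- The t-part of the interpretation assigned by `pd` to `a`. -/
def pdT (pd : α → Option (Interp α)) (a : α) : Set α :=
  {b | ∃ v, pd a = some v ∧ b ∈ tset v}

/-- The f-part of the interpretation assigned by `pd` to `a`. -/
def pdF (pd : α → Option (Interp α)) (a : α) : Set α :=
  {b | ∃ v, pd a = some v ∧ b ∈ fset v}

namespace ADF

variable (D : ADF α)

end ADF

/-- `(Fs, G, B)` is a partially acyclic positive dependency evaluation for `x`
based on the pd-function `pd` of `X`. -/
def IsPAEvalWith (pd : α → Option (Interp α)) (X : Set α)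
    (x : α) (Fs : Set α) (G : List α) (B : Set α) : Prop :=
  (∀ a ∈ G, a ∉ Fs) ∧ G.Nodup ∧
  x ∈ X ∧ Fs ⊆ X ∧ (∀ a ∈ G, a ∈ X) ∧
  (∀ a ∈ Fs, pd a ≠ none) ∧ (∀ a ∈ G, pd a ≠ none) ∧
  (G = [] → x ∈ Fs) ∧ (G ≠ [] → G.getLast? = some x) ∧
  (∀ i : ℕ, ∀ h : i < G.length,
      pdT pd (G.get ⟨i, h⟩) ⊆
        Fs ∪ {b | ∃ j : ℕ, ∃ hj : j < G.length, j < i ∧ G.get ⟨j, hj⟩ = b}) ∧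
  (∀ a ∈ Fs, pdT pd a ⊆ Fs) ∧
  (∀ a ∈ Fs, ∃ b ∈ Fs, a ∈ pdT pd b) ∧
  B = (⋃ a ∈ Fs, pdF pd a) ∪ ⋃ a ∈ {c | c ∈ G}, pdF pd a

namespace ADF
variable (D : ADF α)

/-- `(Fs, G, B)` is a partially acyclic positive dependency evaluation for `x` on `X`. -/
def PAEval (X : Set α) (x : α) (Fs : Set α) (G : List α) (B : Set α) : Prop :=
  ∃ pd, D.MaxSound X pd ∧ IsPAEvalWith pd X x Fs G B

/-- `(G, B)` is an acyclic positive dependency evaluation for `x` on `X`. -/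
def AcyclicEval (X : Set α) (x : α) (G : List α) (B : Set α) : Prop :=
  D.PAEval X x ∅ G B

/-- The standard discarded set `X⁺`. -/
def stdDiscarded (X : Set α) : Set α :=
  {a | ∀ Fs G B, D.PAEval Set.univ a Fs G B → (B ∩ X).Nonempty}

/-- The partially acyclic discarded set `X^{p+}`. -/
def pDiscarded (X : Set α) : Set α :=
  {a | ¬ ∃ Fs G B, D.PAEval Set.univ a Fs G B ∧ Fs ⊆ X ∧ B ∩ X = ∅}

/-- The acyclic discarded set `X^{a+}`. -/
def aDiscarded (X : Set α) : Set α :=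
  {a | ∀ G B, D.AcyclicEval Set.univ a G B → (B ∩ X).Nonempty}

/-- The standard range of `X`. -/
noncomputable def stdRange (X : Set α) : Interp α := mkInterp X (D.stdDiscarded X \ X)

/-- The partially acyclic range of `X`. -/
noncomputable def pRange (X : Set α) : Interp α := mkInterp X (D.pDiscarded X \ X)

/-- The acyclic range of `X`. -/
noncomputable def aRange (X : Set α) : Interp α := mkInterp X (D.aDiscarded X \ X)

/-- Conflict-freeness in an ADF. -/
def ConflictFree (X : Set α) : Prop := ∀ s ∈ X, D.C s (X ∩ D.par s) = true

/-- pd-acyclic conflict-freeness in an ADF. -/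
def PDAcyclicCF (X : Set α) : Prop :=
  ∀ a ∈ X, ∃ G B, D.AcyclicEval X a G B ∧ B ∩ X = ∅

def CCAdmissible (X : Set α) : Prop :=
  D.ConflictFree X ∧ ∀ e ∈ X, D.DecisivelyIn (D.stdRange X) e

def CA2Admissible (X : Set α) : Prop :=
  D.ConflictFree X ∧ ∀ e ∈ X, D.DecisivelyIn (D.pRange X) e

def AAAdmissible (X : Set α) : Prop :=
  D.PDAcyclicCF X ∧ ∀ e ∈ X, D.DecisivelyIn (D.aRange X) e

def CCComplete (X : Set α) : Prop :=
  D.CCAdmissible X ∧ ∀ e, D.DecisivelyIn (D.stdRange X) e → e ∈ X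

def CA2Complete (X : Set α) : Prop :=
  D.CA2Admissible X ∧ ∀ e, D.DecisivelyIn (D.pRange X) e → e ∈ X

def AAComplete (X : Set α) : Prop :=
  D.AAAdmissible X ∧ ∀ e, D.DecisivelyIn (D.aRange X) e → e ∈ X

def CCPreferred (X : Set α) : Prop :=
  D.CCAdmissible X ∧ ∀ Y, D.CCAdmissible Y → X ⊆ Y → X = Y

def CA2Preferred (X : Set α) : Prop :=
  D.CA2Admissible X ∧ ∀ Y, D.CA2Admissible Y → X ⊆ Y → X = Y

def AAPreferred (X : Set α) : Prop :=
  D.AAAdmissible X ∧ ∀ Y, D.AAAdmissible Y → X ⊆ Y → X = Y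

/-- `X` is a model of the ADF. -/
def IsModel (X : Set α) : Prop :=
  D.ConflictFree X ∧ ∀ a, a ∉ X → D.C a (X ∩ D.par a) = false

/-- `X` is a stable extension of the ADF. -/
def IsStable (X : Set α) : Prop :=
  D.PDAcyclicCF X ∧ D.aDiscarded X = Xᶜ

/-- `X` is the grounded extension (the least cc-complete extension). -/
def IsGrounded (X : Set α) : Prop :=
  D.CCComplete X ∧ ∀ Y, D.CCComplete Y → X ⊆ Y

/-- `X` is the acyclic grounded extension (the least aa-complete extension). -/
def IsAcyclicGrounded (X : Set α) : Prop :=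
  D.AAComplete X ∧ ∀ Y, D.AAComplete Y → X ⊆ Y

/-- The link `(r,s)` is supporting. -/
def Supporting (r s : α) : Prop :=
  ¬ ∃ R' ⊆ D.par s, D.C s R' = true ∧ D.C s (R' ∪ {r}) = false

/-- The link `(r,s)` is attacking. -/
def Attacking (r s : α) : Prop :=
  ¬ ∃ R' ⊆ D.par s, D.C s R' = false ∧ D.C s (R' ∪ {r}) = true

/-- Bipolar ADFs. -/
def IsBADF : Prop := ∀ r s, D.L r s → D.Supporting r s ∨ D.Attacking r s

/-- Positive dependency acyclic ADFs (AADF⁺): every partially acyclic evaluation is acyclic. -/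
def IsAADFplus : Prop := ∀ X x Fs G B, D.PAEval X x Fs G B → Fs = ∅

end ADF

/-! ### Frameworks with sets of attacking arguments (SETAFs) -/

/-- A framework with sets of attacking arguments. -/
structure SETAF (α : Type u) where
  R : Set α → α → Prop
  nonempty_of_R : ∀ S a, R S a → S.Nonempty

namespace SETAF

variable (sf : SETAF α)

/-- `X` is conflict-free in the SETAF. -/
def ConflictFree (X : Set α) : Prop := ¬ ∃ S ⊆ X, ∃ a ∈ X, sf.R S a

/-- The discarded set of `X` in the SETAF. -/
def discarded (X : Set α) : Set α := {b | ∃ S ⊆ X, sf.R S b}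

/-- `X` defends `a` in the SETAF. -/
def Defends (X : Set α) (a : α) : Prop :=
  ∀ S, sf.R S a → ∃ s ∈ S, s ∈ sf.discarded X

def Admissible (X : Set α) : Prop := sf.ConflictFree X ∧ ∀ a ∈ X, sf.Defends X a

def Complete (X : Set α) : Prop := sf.Admissible X ∧ ∀ a, sf.Defends X a → a ∈ X

def Preferred (X : Set α) : Prop :=
  sf.Admissible X ∧ ∀ Y, sf.Admissible Y → X ⊆ Y → X = Y

/-- `X` is the grounded extension: the least complete extension. -/
def IsGrounded (X : Set α) : Prop := sf.Complete X ∧ ∀ Y, sf.Complete Y → X ⊆ Y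

def Stable (X : Set α) : Prop := sf.ConflictFree X ∧ sf.discarded X = Xᶜ

/-- The ADF corresponding to a SETAF. -/
noncomputable def toADF : ADF α where
  L x y := ∃ B : Set α, x ∈ B ∧ sf.R B y
  C a B := decide (¬ ∃ S, sf.R S a ∧ S ⊆ B)

end SETAF

/-! ### Extended argumentation frameworks with collective defense attacks (EAFCs) -/

/-- An EAFC: binary attacks `R` and collective defense attacks `D` on attacks. -/
structure EAFC (α : Type u) where
  R : α → α → Prop
  D : Set α → α → α → Prop
  nonempty_of_D : ∀ C a b, D C a b → C.Nonempty
  attack_of_D : ∀ C a b, D C a b → R a b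

namespace EAFC

variable (E : EAFC α)

/-- `a` defeats `b` w.r.t. `X`. -/
def Defeats (X : Set α) (a b : α) : Prop :=
  E.R a b ∧ ¬ ∃ C ⊆ X, E.D C a b

/-- `RS` is a reinstatement set on `X` for the defeat of `b` by `a`. -/
def Reinstatement (X : Set α) (RS : Set (α × α)) (a b : α) : Prop :=
  RS.Finite ∧
  (∀ p ∈ RS, p.1 ∈ X ∧ E.Defeats X p.1 p.2) ∧
  (a, b) ∈ RS ∧
  ∀ p ∈ RS, ∀ C : Set α, E.D C p.1 p.2 → ∃ q ∈ RS, q.2 ∈ C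

/-- The discarded set `X⁺` of `X` in the EAFC. -/
def discarded (X : Set α) : Set α :=
  {b | ∃ a ∈ X, E.Defeats X a b ∧ ∃ RS, E.Reinstatement X RS a b}

/-- `X` defends `a` in the EAFC. -/
def Defends (X : Set α) (a : α) : Prop :=
  ∀ b, E.Defeats X b a → b ∈ E.discarded X

/-- `X` is conflict-free in the EAFC. -/
def ConflictFree (X : Set α) : Prop := ¬ ∃ a ∈ X, ∃ b ∈ X, E.Defeats X a b

def Admissible (X : Set α) : Prop := E.ConflictFree X ∧ ∀ a ∈ X, E.Defends X a

def Complete (X : Set α) : Prop := E.Admissible X ∧ ∀ a, E.Defends X a → a ∈ X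

def Preferred (X : Set α) : Prop :=
  E.Admissible X ∧ ∀ Y, E.Admissible Y → X ⊆ Y → X = Y

def Stable (X : Set α) : Prop :=
  E.ConflictFree X ∧ ∀ b, b ∉ X → ∃ a ∈ X, E.Defeats X a b

/-- The characteristic function of the EAFC. -/
def charFun (X : Set α) : Set α := {a | E.Defends X a}

/-- The grounded extension of the EAFC. -/
def grounded : Set α := ⋃ i : ℕ, E.charFun^[i] ∅

/-- Every argument has finitely many attackers, every attack finitely many defense attackers. -/
def Finitary : Prop :=
  (∀ a, {b | E.R b a}.Finite) ∧ ∀ a b, {C | E.D C a b}.Finite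

/-- Strong consistency of an EAFC. -/
def StronglyConsistent : Prop :=
  ¬ ∃ (x y z : α) (X : Set α), E.R x y ∧ x ∈ X ∧ E.D X z y

/-- The EAFC is bounded hierarchical. -/
def BoundedHierarchical : Prop :=
  ∃ n : ℕ, ∃ hn : 0 < n,
    ∃ (As : Fin n → Set α) (Rs : Fin n → α → α → Prop)
      (Ds : Fin n → Set α → α → α → Prop),
      (∀ C a b, ¬ Ds ⟨n - 1, Nat.sub_lt hn one_pos⟩ C a b) ∧
      (Set.univ = ⋃ i, As i) ∧
      (∀ a b, E.R a b ↔ ∃ i, Rs i a b) ∧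
      (∀ C a b, E.D C a b ↔ ∃ i, Ds i C a b) ∧
      (∀ i a b, Rs i a b → a ∈ As i ∧ b ∈ As i) ∧
      (∀ i C a b, Ds i C a b → Rs i a b ∧
        ∃ h : (i : ℕ) + 1 < n, C ⊆ As ⟨(i : ℕ) + 1, h⟩)

/-- The ADF corresponding to a strongly consistent EAFC. -/
noncomputable def toADF : ADF α where
  L a b := E.R a b ∨ ∃ (c : α) (X : Set α), a ∈ X ∧ E.D X c b
  C a B := decide (¬ ∃ x ∈ B, E.R x a ∧ ¬ ∃ B' ⊆ B, E.D B' x a)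

end EAFC

/-! ### Argumentation frameworks with necessities (AFNs) -/

/-- An AFN: binary attacks `R` and necessity relation `N`. -/
structure AFN (α : Type u) where
  R : α → α → Prop
  N : Set α → α → Prop
  nonempty_of_N : ∀ B a, N B a → B.Nonempty

namespace AFN

variable (fn : AFN α)

/-- `G` is a powerful sequence for `a` on `X`. -/
def PowerfulSeq (X : Set α) (G : List α) (a : α) : Prop :=
  G ≠ [] ∧ (∀ b ∈ G, b ∈ X) ∧ G.getLast? = some a ∧
  ∀ i : ℕ, ∀ h : i < G.length, ∀ B : Set α, fn.N B (G.get ⟨i, h⟩) →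
    ∃ j : ℕ, ∃ hj : j < G.length, j < i ∧ G.get ⟨j, hj⟩ ∈ B

/-- `a` is powerful in `X`. -/
def Powerful (X : Set α) (a : α) : Prop :=
  a ∈ X ∧ ∃ G, fn.PowerfulSeq X G a

/-- `X` is coherent. -/
def Coherent (X : Set α) : Prop := ∀ a ∈ X, fn.Powerful X a

/-- The discarded set `X^att` of `X` in the AFN. -/
def discardedAtt (X : Set α) : Set α :=
  {a | ∀ C, fn.Coherent C → a ∈ C → ∃ c ∈ C, ∃ e ∈ X, fn.R e c}

/-- `X` is conflict-free in the AFN. -/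
def ConflictFree (X : Set α) : Prop := ¬ ∃ a ∈ X, ∃ b ∈ X, fn.R a b

/-- `X` is strongly coherent. -/
def StronglyCoherent (X : Set α) : Prop := fn.ConflictFree X ∧ fn.Coherent X

/-- The deactivated set `X⁺` of `X` in the AFN. -/
def deactivated (X : Set α) : Set α :=
  {a | (∃ e ∈ X, fn.R e a) ∨ ∃ B, fn.N B a ∧ X ∩ B = ∅}

/-- `X` defends `a` in the AFN. -/
def Defends (X : Set α) (a : α) : Prop :=
  fn.Coherent (X ∪ {a}) ∧ ∀ b, fn.R b a → b ∈ fn.discardedAtt X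

def Admissible (X : Set α) : Prop := fn.StronglyCoherent X ∧ ∀ a ∈ X, fn.Defends X a

def Complete (X : Set α) : Prop := fn.Admissible X ∧ ∀ a, fn.Defends X a → a ∈ X

def Preferred (X : Set α) : Prop :=
  fn.Admissible X ∧ ∀ Y, fn.Admissible Y → X ⊆ Y → X = Y

/-- `X` is the grounded extension: the least complete extension. -/
def IsGrounded (X : Set α) : Prop := fn.Complete X ∧ ∀ Y, fn.Complete Y → X ⊆ Y

/-- Stability via completeness and the deactivated set. -/
def Stable (X : Set α) : Prop := fn.Complete X ∧ fn.deactivated X = Xᶜ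

/-- Stability via strong coherence and the discarded set. -/
def StableAtt (X : Set α) : Prop :=
  fn.StronglyCoherent X ∧ fn.discardedAtt X = Xᶜ

/-- Strong consistency of an AFN: no argument is both supported and attacked by
the same argument. -/
def StronglyConsistent : Prop :=
  ∀ a : α, {b | ∃ B, b ∈ B ∧ fn.N B a} ∩ {b | fn.R b a} = ∅

/-- The ADF corresponding to a strongly consistent AFN. -/
noncomputable def toADF : ADF α where
  L x y := fn.R x y ∨ ∃ B, x ∈ B ∧ fn.N B y
  C a P := decide (¬ ((∃ p ∈ P, fn.R p a) ∨ ∃ Z, fn.N Z a ∧ Z ∩ P = ∅))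

end AFN

end Dialectical

/-! In the ADF of an AFN, `s` is decisively in w.r.t. `v` iff `v` rejects every attacker of `s`
and accepts a member of every necessity set of `s`. For the acyclic range of a strongly coherent
`X`, the second half says that every necessity set of `a` meets `X`, i.e. that `X ∪ {a}` is
coherent (append `a` to a powerful sequence running through all of `X`). The first half says that
the attackers of `a` lie in `X^{a+} \ X`, and `X^{a+} = X^att`, which is disjoint from `X` by
conflict-freeness. The identity `X^{a+} = X^att` holds because acyclic evaluations over `A` are
duplicate-free powerful sequences whose rejected sets are the attackers of their entries: one
direction reads the sequence off the evaluation; for the other, a minimal hitting set of the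
necessities of an entry among the earlier entries gives a minimal decisively-in interpretation,
which by strong consistency rejects exactly the attackers of that entry. -/

namespace Dialectical

variable {α : Type u}

theorem tset_mkInterp (T F : Set α) : tset (mkInterp T F) = T := by
  ext c
  by_cases hT : c ∈ T <;> simp [tset, mkInterp, hT]

theorem fset_mkInterp (T F : Set α) : fset (mkInterp T F) = F \ T := by
  ext c
  by_cases hT : c ∈ T <;> by_cases hF : c ∈ F <;> simp [fset, mkInterp, hT, hF]

theorem pdT_eq_tset {pd : α → Option (Interp α)} {c : α} {v : Interp α} (h : pd c = some v) :
    pdT pd c = tset v := by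
  ext; simp [pdT, h]

theorem pdF_eq_fset {pd : α → Option (Interp α)} {c : α} {v : Interp α} (h : pd c = some v) :
    pdF pd c = fset v := by
  ext; simp [pdF, h]

theorem mem_take_iff_exists_lt {l : List α} {i : ℕ} {z : α} :
    z ∈ l.take i ↔ ∃ j, ∃ hj : j < l.length, j < i ∧ l[j] = z := by
  rw [List.mem_take_iff_getElem]
  constructor
  · rintro ⟨j, hj, rfl⟩
    exact ⟨j, by omega, by omega, rfl⟩
  · rintro ⟨j, hj, hji, rfl⟩
    exact ⟨j, by omega, rfl⟩

namespace ADF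

variable (D : ADF α)

/-- Completions of `v` to `par s` realise exactly the parent sets `P` lying between the parents
that `v` accepts and those it does not reject. -/
theorem decisivelyIn_iff_forall_between (v : Interp α) (s : α) :
    D.DecisivelyIn v s ↔
      ∀ P, tset v ∩ D.par s ⊆ P → P ⊆ D.par s \ fset v → D.C s P = true := by
  constructor
  · intro hv P hlo hhi
    let w : Interp α := fun c => if c ∈ D.par s ∧ v c = none then some (decide (c ∈ P)) else v c
    have hw : Completion v w (idom v ∪ D.par s) := by
      refine ⟨?_, fun c hc => if_neg fun h => hc h.2⟩
      ext c
      by_cases hc : c ∈ D.par s <;> by_cases hvc : v c = none <;> simp [w, idom, hc, hvc]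
    have hP : tset w ∩ D.par s = P := by
      ext c
      by_cases hc : c ∈ D.par s
      · rcases hvc : v c with _ | _ | _
        · simp [w, tset, hc, hvc]
        · simpa [w, tset, hc, hvc] using fun h => (hhi h).2 hvc
        · simpa [w, tset, hc, hvc] using hlo ⟨hvc, hc⟩
      · simpa [hc] using fun h => hc (hhi h).1
    simpa [evalCond, hP] using hv w hw
  · intro hP w hw
    refine hP _ (fun c ⟨hc, hcpar⟩ => ⟨?_, hcpar⟩) (fun c ⟨hc, hcpar⟩ => ⟨hcpar, fun hcf => ?_⟩)
    · have hvc : c ∈ idom v := by simp_all [idom, tset]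
      simpa [tset, hw.2 c hvc] using hc
    · have hwc : w c = v c := hw.2 c (by simp_all [idom, fset])
      simp_all [tset, fset]

theorem maxSound_univ_of_forall_minDecIn {v : α → Interp α} (hv : ∀ x, D.MinDecIn (v x) x) :
    D.MaxSound Set.univ (fun x => some (v x)) := by
  refine ⟨fun x _ => ⟨?_, by simp⟩, ?_⟩
  · rintro _ ⟨⟩
    exact ⟨hv x, Set.subset_univ _⟩
  · rintro ⟨X'', -, -, -, hsub, -⟩
    exact hsub.2 fun x _ => by simp [soundDom]

end ADF

namespace AFN

variable (fn : AFN α)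

theorem toADF_C_eq_true_iff (s : α) (P : Set α) :
    fn.toADF.C s P = true ↔ (∀ p ∈ P, ¬ fn.R p s) ∧ ∀ Z, fn.N Z s → (Z ∩ P).Nonempty := by
  simp [toADF, Set.nonempty_iff_ne_empty]

theorem toADF_decisivelyIn_iff (v : Interp α) (s : α) :
    fn.toADF.DecisivelyIn v s ↔
      (∀ b, fn.R b s → b ∈ fset v) ∧ ∀ Z, fn.N Z s → (Z ∩ tset v).Nonempty := by
  have hpar_of_R {b} (hb : fn.R b s) : b ∈ fn.toADF.par s := Or.inl hb
  have hpar_of_N {Z z} (hZ : fn.N Z s) (hz : z ∈ Z) : z ∈ fn.toADF.par s := Or.inr ⟨Z, hz, hZ⟩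
  rw [ADF.decisivelyIn_iff_forall_between]
  constructor
  · intro hv
    have htf : tset v ∩ fn.toADF.par s ⊆ fn.toADF.par s \ fset v := fun c ⟨hct, hc⟩ =>
      ⟨hc, fun hcf => by simp_all [tset, fset]⟩
    refine ⟨fun b hb => ?_, fun Z hZ => ?_⟩
    · by_contra hbf
      exact ((fn.toADF_C_eq_true_iff _ _).1 (hv _ htf subset_rfl)).1 b ⟨hpar_of_R hb, hbf⟩ hb
    · obtain ⟨z, hzZ, hzt, -⟩ := ((fn.toADF_C_eq_true_iff _ _).1 (hv _ subset_rfl htf)).2 Z hZ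
      exact ⟨z, hzZ, hzt⟩
  · rintro ⟨hR, hN⟩ P hlo hhi
    refine (fn.toADF_C_eq_true_iff _ _).2 ⟨fun p hp hps => (hhi hp).2 (hR p hps), fun Z hZ => ?_⟩
    obtain ⟨z, hzZ, hzt⟩ := hN Z hZ
    exact ⟨z, hzZ, hlo ⟨hzt, hpar_of_N hZ hzZ⟩⟩

/-- A minimal hitting set of the necessities of `x` consists of supporters of `x`, so under strong
consistency it contains no attacker of `x`. -/
theorem toADF_minDecIn_of_minimal (h : fn.StronglyConsistent) {x : α} {T : Set α}
    (hT : Minimal (fun T => ∀ Z, fn.N Z x → (Z ∩ T).Nonempty) T) :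
    fn.toADF.MinDecIn (mkInterp T {e | fn.R e x}) x := by
  have hsupp : ∀ t ∈ T, ∃ Z, fn.N Z x ∧ t ∈ Z := by
    intro t ht
    by_contra! hno
    have hhit : ∀ Z, fn.N Z x → (Z ∩ (T \ {t})).Nonempty := fun Z hZ => by
      obtain ⟨z, hzZ, hzT⟩ := hT.1 Z hZ
      exact ⟨z, hzZ, hzT, fun hzt => hno Z hZ (hzt ▸ hzZ)⟩
    exact (hT.2 hhit Set.sdiff_subset ht).2 rfl
  have hnotR : ∀ t ∈ T, ¬ fn.R t x := fun t ht htR => by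
    obtain ⟨Z, hZ, htZ⟩ := hsupp t ht
    exact (h x).subset ⟨⟨Z, htZ, hZ⟩, htR⟩
  have hfset : fset (mkInterp T {e | fn.R e x}) = {e | fn.R e x} := by
    rw [fset_mkInterp]
    exact sdiff_eq_left.2 (Set.disjoint_left.2 fun t htR htT => hnotR t htT htR)
  simp only [ADF.MinDecIn, toADF_decisivelyIn_iff, tset_mkInterp, hfset]
  refine ⟨⟨fun b hb => hb, hT.1⟩, fun w ⟨hwR, hwN⟩ hwt hwf => ⟨?_, hwf.antisymm hwR⟩⟩
  exact hwt.antisymm (hT.2 hwN hwt)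

theorem exists_minDecIn (h : fn.StronglyConsistent) [Finite α] {x : α} {S : Set α}
    (hS : ∀ Z, fn.N Z x → (Z ∩ S).Nonempty) :
    ∃ v, fn.toADF.MinDecIn v x ∧ tset v ⊆ S ∧ fset v ⊆ {e | fn.R e x} := by
  obtain ⟨T, hTS, hT⟩ := exists_minimal_le_of_wellFoundedLT
    (fun T => ∀ Z, fn.N Z x → (Z ∩ T).Nonempty) S hS
  refine ⟨_, fn.toADF_minDecIn_of_minimal h hT, ?_, ?_⟩
  · rwa [tset_mkInterp]
  · rw [fset_mkInterp]
    exact Set.sdiff_subset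

/-- The condition on a powerful sequence, detached from its carrier and its endpoint. -/
def WellSupported (G : List α) : Prop :=
  ∀ (i : ℕ) (hi : i < G.length) (Z : Set α), fn.N Z G[i] → ∃ z ∈ Z, z ∈ G.take i

variable {fn}

theorem powerfulSeq_iff {X : Set α} {G : List α} {a : α} :
    fn.PowerfulSeq X G a ↔ G.getLast? = some a ∧ (∀ b ∈ G, b ∈ X) ∧ fn.WellSupported G := by
  simp only [PowerfulSeq, WellSupported, List.get_eq_getElem, mem_take_iff_exists_lt]
  constructor
  · rintro ⟨-, hX, hlast, hG⟩
    refine ⟨hlast, hX, fun i hi Z hZ => ?_⟩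
    obtain ⟨j, hj, hji, hjZ⟩ := hG i hi Z hZ
    exact ⟨_, hjZ, j, hj, hji, rfl⟩
  · rintro ⟨hlast, hX, hG⟩
    refine ⟨fun h => by simp [h] at hlast, hX, hlast, fun i hi Z hZ => ?_⟩
    obtain ⟨_, hzZ, j, hj, hji, rfl⟩ := hG i hi Z hZ
    exact ⟨j, hj, hji, hzZ⟩

theorem PowerfulSeq.mono {X Y : Set α} {G : List α} {a : α} (hG : fn.PowerfulSeq X G a)
    (hXY : X ⊆ Y) : fn.PowerfulSeq Y G a := by
  rw [powerfulSeq_iff] at hG ⊢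
  exact ⟨hG.1, fun b hb => hXY (hG.2.1 b hb), hG.2.2⟩

theorem wellSupported_nil : fn.WellSupported [] := fun _ hi => absurd hi (Nat.not_lt_zero _)

theorem wellSupported_concat_iff {G : List α} {x : α} :
    fn.WellSupported (G ++ [x]) ↔ fn.WellSupported G ∧ ∀ Z, fn.N Z x → ∃ z ∈ Z, z ∈ G := by
  constructor
  · intro hG
    refine ⟨fun i hi Z hZ => ?_, fun Z hZ => ?_⟩
    · have := hG i (by simp; omega) Z (by rwa [List.getElem_append_left hi])
      rwa [List.take_append_of_le_length hi.le] at this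
    · have := hG G.length (by simp) Z (by simpa using hZ)
      rwa [List.take_left' rfl] at this
  · rintro ⟨hG, hx⟩ i hi Z hZ
    rcases Nat.lt_or_ge i G.length with hiG | hiG
    · rw [List.take_append_of_le_length hiG.le]
      exact hG i hiG Z (by rwa [List.getElem_append_left hiG] at hZ)
    · have hieq : i = G.length := by simp at hi; omega
      subst hieq
      rw [List.take_left' rfl]
      exact hx Z (by simpa using hZ)

theorem WellSupported.take {G : List α} (hG : fn.WellSupported G) (n : ℕ) :
    fn.WellSupported (G.take n) := by
  intro i hi Z hZ
  have hin : i < n := by simp at hi; omega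
  rw [List.getElem_take] at hZ
  rw [List.take_take, min_eq_left hin.le]
  exact hG i (by simp at hi; omega) Z hZ

theorem WellSupported.append {G H : List α} (hG : fn.WellSupported G)
    (hH : fn.WellSupported H) : fn.WellSupported (G ++ H) := by
  induction H using List.reverseRecOn with
  | nil => simpa using hG
  | append_singleton H x ih =>
    obtain ⟨hH, hx⟩ := wellSupported_concat_iff.1 hH
    rw [← List.append_assoc, wellSupported_concat_iff]
    refine ⟨ih hH, fun Z hZ => ?_⟩
    obtain ⟨z, hzZ, hzH⟩ := hx Z hZ
    exact ⟨z, hzZ, List.mem_append_right G hzH⟩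

theorem WellSupported.exists_mem_ne {G : List α} (hG : fn.WellSupported G) {x : α} (hx : x ∈ G)
    {Z : Set α} (hZ : fn.N Z x) : ∃ z ∈ Z, z ∈ G ∧ z ≠ x := by
  have hlt := List.idxOf_lt_length_iff.2 hx
  obtain ⟨z, hzZ, hz⟩ := hG _ hlt Z (by rwa [List.getElem_idxOf hlt])
  have hzG := List.mem_of_mem_take hz
  refine ⟨z, hzZ, hzG, fun hzx => ?_⟩
  subst hzx
  exact (lt_irrefl _) ((List.mem_take_iff_idxOf_lt hzG).1 hz)

theorem WellSupported.powerfulSeq_take {G : List α} (hG : fn.WellSupported G) (i : ℕ)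
    (hi : i < G.length) : fn.PowerfulSeq {c | c ∈ G} (G.take (i + 1)) G[i] := by
  rw [powerfulSeq_iff, ← List.take_concat_get' G i hi]
  refine ⟨List.getLast?_concat, fun b hb => ?_, ?_⟩
  · rw [List.take_concat_get'] at hb
    exact List.mem_of_mem_take hb
  · rw [List.take_concat_get']
    exact hG.take _

theorem WellSupported.coherent {G : List α} (hG : fn.WellSupported G) :
    fn.Coherent {c | c ∈ G} := by
  intro c hc
  obtain ⟨i, hi, rfl⟩ := List.getElem_of_mem hc
  exact ⟨hc, _, hG.powerfulSeq_take i hi⟩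

theorem WellSupported.exists_nodup {H : List α} (hH : fn.WellSupported H) :
    ∃ G, G.Nodup ∧ fn.WellSupported G ∧ ∀ x, x ∈ G ↔ x ∈ H := by
  induction H using List.reverseRecOn with
  | nil => exact ⟨[], List.nodup_nil, wellSupported_nil, fun _ => Iff.rfl⟩
  | append_singleton H x ih =>
    obtain ⟨hH, hx⟩ := wellSupported_concat_iff.1 hH
    obtain ⟨G, hnd, hG, hGH⟩ := ih hH
    by_cases hxH : x ∈ H
    · exact ⟨G, hnd, hG, fun y => by simp only [hGH, List.mem_append, List.mem_singleton]; grind⟩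
    · refine ⟨G ++ [x], ?_, wellSupported_concat_iff.2 ⟨hG, fun Z hZ => ?_⟩, fun y => by simp [hGH]⟩
      · exact hnd.append (List.nodup_singleton x) (by simpa [hGH] using hxH)
      · simpa only [hGH] using hx Z hZ

theorem Coherent.exists_nodup_powerfulSeq {C : Set α} (hC : fn.Coherent C) {b : α} (hb : b ∈ C) :
    ∃ G, G.Nodup ∧ fn.PowerfulSeq C G b := by
  obtain ⟨-, H, hH⟩ := hC b hb
  rw [powerfulSeq_iff] at hH
  obtain ⟨hlast, hHC, hH⟩ := hH
  obtain ⟨G, hnd, hG, hGH⟩ := hH.exists_nodup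
  have hbG : b ∈ G := (hGH b).2 (List.mem_of_getLast? hlast)
  have hlt := List.idxOf_lt_length_iff.2 hbG
  refine ⟨G.take (G.idxOf b + 1), hnd.sublist (List.take_sublist _ _), ?_⟩
  have hseq := hG.powerfulSeq_take _ hlt
  rw [List.getElem_idxOf hlt] at hseq
  exact hseq.mono fun c hc => hHC c ((hGH c).1 hc)

theorem Coherent.exists_wellSupported [Finite α] {X : Set α} (hX : fn.Coherent X) :
    ∃ G, fn.WellSupported G ∧ ∀ x, x ∈ G ↔ x ∈ X := by
  have hcover : ∀ L : List α, (∀ x ∈ L, x ∈ X) →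
      ∃ G, fn.WellSupported G ∧ (∀ x ∈ G, x ∈ X) ∧ ∀ x ∈ L, x ∈ G := by
    intro L
    induction L with
    | nil => exact fun _ => ⟨[], wellSupported_nil, by simp, by simp⟩
    | cons y L ih =>
      intro hL
      obtain ⟨G, hG, hGX, hLG⟩ := ih fun x hx => hL x (List.mem_cons_of_mem y hx)
      obtain ⟨-, H, hH⟩ := hX y (hL y List.mem_cons_self)
      rw [powerfulSeq_iff] at hH
      refine ⟨G ++ H, hG.append hH.2.2, fun x hx => ?_, fun x hx => ?_⟩
      · rcases List.mem_append.1 hx with hx | hx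
        exacts [hGX x hx, hH.2.1 x hx]
      · rcases List.mem_cons.1 hx with rfl | hx
        exacts [List.mem_append_right G (List.mem_of_getLast? hH.1),
          List.mem_append_left H (hLG x hx)]
  have hfin := Set.toFinite X
  obtain ⟨G, hG, hGX, hXG⟩ := hcover hfin.toFinset.toList (by simp)
  exact ⟨G, hG, fun x => ⟨hGX x, fun hx => hXG x (by simpa using hx)⟩⟩

theorem coherent_union_singleton_iff [Finite α] {X : Set α} (hX : fn.Coherent X) (a : α) :
    fn.Coherent (X ∪ {a}) ↔ ∀ Z, fn.N Z a → (Z ∩ X).Nonempty := by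
  constructor
  · intro hXa Z hZ
    obtain ⟨-, H, hH⟩ := hXa a (Or.inr rfl)
    rw [powerfulSeq_iff] at hH
    obtain ⟨z, hzZ, hzH, hza⟩ := hH.2.2.exists_mem_ne (List.mem_of_getLast? hH.1) hZ
    exact ⟨z, hzZ, (hH.2.1 z hzH).resolve_right hza⟩
  · intro haX x hx
    rcases hx with hx | rfl
    · obtain ⟨-, H, hH⟩ := hX x hx
      exact ⟨Or.inl hx, H, hH.mono Set.subset_union_left⟩
    · obtain ⟨G, hG, hGX⟩ := hX.exists_wellSupported
      refine ⟨Or.inr rfl, G ++ [x], powerfulSeq_iff.2 ⟨List.getLast?_concat, ?_, ?_⟩⟩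
      · intro b hb
        rcases List.mem_append.1 hb with hb | hb
        exacts [Or.inl ((hGX b).1 hb), Or.inr (List.mem_singleton.1 hb)]
      · refine wellSupported_concat_iff.2 ⟨hG, fun Z hZ => ?_⟩
        obtain ⟨z, hzZ, hzX⟩ := haX Z hZ
        exact ⟨z, hzZ, (hGX z).2 hzX⟩

theorem wellSupported_of_acyclicEval {X : Set α} {b : α} {G : List α} {B : Set α}
    (hev : fn.toADF.AcyclicEval X b G B) :
    G.getLast? = some b ∧ fn.WellSupported G ∧ ∀ c ∈ G, ∀ e, fn.R e c → e ∈ B := by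
  obtain ⟨pd, hpd, -, -, -, -, hGX, -, hpdG, hnil, hlast, hprev, -, -, rfl⟩ := hev
  have hdec : ∀ c ∈ G, ∃ v, pd c = some v ∧ fn.toADF.DecisivelyIn v c := by
    intro c hc
    obtain ⟨v, hv⟩ := Option.ne_none_iff_exists'.1 (hpdG c hc)
    exact ⟨v, hv, (((hpd.1 c (hGX c hc)).1 v hv).1).1⟩
  refine ⟨hlast fun hG => absurd (hnil hG) (Set.notMem_empty b), fun i hi Z hZ => ?_,
    fun c hc e he => ?_⟩
  · obtain ⟨v, hv, hvdec⟩ := hdec _ (List.getElem_mem hi)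
    obtain ⟨z, hzZ, hzt⟩ := ((toADF_decisivelyIn_iff fn v _).1 hvdec).2 Z hZ
    have hzprev := hprev i hi (by rw [List.get_eq_getElem, pdT_eq_tset hv]; exact hzt)
    rcases hzprev with hz | ⟨j, hj, hji, rfl⟩
    · exact absurd hz (Set.notMem_empty z)
    · exact ⟨_, hzZ, mem_take_iff_exists_lt.2 ⟨j, hj, hji, rfl⟩⟩
  · obtain ⟨v, hv, hvdec⟩ := hdec c hc
    refine Or.inr (Set.mem_biUnion hc ?_)
    rw [pdF_eq_fset hv]
    exact ((toADF_decisivelyIn_iff fn v c).1 hvdec).1 e he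

/-- Each entry is made decisively in by accepting a minimal hitting set of its necessities among
the earlier entries; duplicate-freeness makes "earlier" well defined. -/
theorem PowerfulSeq.exists_acyclicEval (h : fn.StronglyConsistent) [Finite α] {X : Set α}
    {G : List α} {b : α} (hnd : G.Nodup) (hG : fn.PowerfulSeq X G b) :
    ∃ B, fn.toADF.AcyclicEval Set.univ b G B ∧ ∀ e ∈ B, ∃ c ∈ G, fn.R e c := by
  rw [powerfulSeq_iff] at hG
  obtain ⟨hlast, -, hG⟩ := hG
  have hv : ∀ x, ∃ v, fn.toADF.MinDecIn v x ∧
      (x ∈ G → tset v ⊆ {z | z ∈ G.take (G.idxOf x)}) ∧ fset v ⊆ {e | fn.R e x} := by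
    intro x
    by_cases hx : x ∈ G
    · have hlt := List.idxOf_lt_length_iff.2 hx
      obtain ⟨v, hmin, ht, hf⟩ := fn.exists_minDecIn h (x := x)
        (S := {z | z ∈ G.take (G.idxOf x)}) fun Z hZ => by
          obtain ⟨z, hzZ, hz⟩ := hG _ hlt Z (by rwa [List.getElem_idxOf hlt])
          exact ⟨z, hzZ, hz⟩
      exact ⟨v, hmin, fun _ => ht, hf⟩
    · obtain ⟨v, hmin, -, hf⟩ := fn.exists_minDecIn h (x := x) (S := Set.univ) fun Z hZ =>
        (fn.nonempty_of_N Z x hZ).mono fun z hz => ⟨hz, trivial⟩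
      exact ⟨v, hmin, fun hxG => absurd hxG hx, hf⟩
  choose v hmin ht hf using hv
  have hGne : G ≠ [] := fun hG => by simp [hG] at hlast
  refine ⟨_, ⟨_, ADF.maxSound_univ_of_forall_minDecIn _ hmin, fun _ _ => Set.notMem_empty _, hnd,
    trivial, Set.empty_subset _, fun _ _ => trivial, fun _ h => absurd h (Set.notMem_empty _),
    fun _ _ => Option.some_ne_none _, fun hG => absurd hG hGne, fun _ => hlast, ?_,
    fun _ h => absurd h (Set.notMem_empty _), fun _ h => absurd h (Set.notMem_empty _), rfl⟩, ?_⟩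
  · intro i hi z hz
    rw [List.get_eq_getElem, pdT_eq_tset rfl] at hz
    have hz := ht _ (List.getElem_mem hi) hz
    rw [Set.mem_ofPred_eq, hnd.idxOf_getElem, mem_take_iff_exists_lt] at hz
    exact Or.inr hz
  · rintro e (he | he)
    · simp at he
    · obtain ⟨c, hc, he⟩ := Set.mem_iUnion₂.1 he
      rw [pdF_eq_fset rfl] at he
      exact ⟨c, hc, hf c he⟩

theorem discardedAtt_subset_toADF_aDiscarded (X : Set α) :
    fn.discardedAtt X ⊆ fn.toADF.aDiscarded X := by
  intro b hb G B hev
  obtain ⟨hlast, hG, hB⟩ := wellSupported_of_acyclicEval hev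
  obtain ⟨c, hc, e, heX, hec⟩ := hb _ hG.coherent (List.mem_of_getLast? hlast)
  exact ⟨e, hB c hc e hec, heX⟩

theorem toADF_aDiscarded_subset_discardedAtt (h : fn.StronglyConsistent) [Finite α]
    (X : Set α) : fn.toADF.aDiscarded X ⊆ fn.discardedAtt X := by
  intro b hb C hC hbC
  obtain ⟨G, hnd, hG⟩ := hC.exists_nodup_powerfulSeq hbC
  obtain ⟨B, hev, hB⟩ := hG.exists_acyclicEval h hnd
  obtain ⟨e, heB, heX⟩ := hb G B hev
  obtain ⟨c, hc, hec⟩ := hB e heB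
  exact ⟨c, (powerfulSeq_iff.1 hG).2.1 c hc, e, heX, hec⟩

theorem toADF_aDiscarded_eq_discardedAtt (h : fn.StronglyConsistent) [Finite α] (X : Set α) :
    fn.toADF.aDiscarded X = fn.discardedAtt X :=
  (toADF_aDiscarded_subset_discardedAtt h X).antisymm (discardedAtt_subset_toADF_aDiscarded X)

theorem StronglyCoherent.disjoint_discardedAtt {X : Set α} (hX : fn.StronglyCoherent X) :
    Disjoint (fn.discardedAtt X) X := by
  refine Set.disjoint_left.2 fun b hb hbX => ?_
  obtain ⟨c, hc, e, heX, hec⟩ := hb X hX.2 hbX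
  exact hX.1 ⟨e, heX, c, hc, hec⟩

end AFN

end Dialectical

open Dialectical in
/-- a strongly coherent set defends `a` in a strongly consistent AFN iff
`a` is decisively in w.r.t. the acyclic range of `X` in the corresponding ADF. -/
theorem afn_toADF_defends_iff_decisivelyIn
    {α : Type} [Fintype α] (fn : AFN α) (h : fn.StronglyConsistent)
    (X : Set α) (hsc : fn.StronglyCoherent X) (a : α) :
    fn.Defends X a ↔ fn.toADF.DecisivelyIn (fn.toADF.aRange X) a := by
  rw [AFN.Defends, AFN.toADF_decisivelyIn_iff, AFN.coherent_union_singleton_iff hsc.2,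
    ADF.aRange, tset_mkInterp, fset_mkInterp, sdiff_idem, AFN.toADF_aDiscarded_eq_discardedAtt h,
    sdiff_eq_left.2 hsc.disjoint_discardedAtt, and_comm]
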